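/- If the power series ∑ cₙ ⋆ (z − z₀)ⁿ converges for all z with ‖z − z₀‖ < R (for some R > 0), then limsup_{n→∞} ‖cₙ‖^{1/n} ≤ ‖1‖/R, where 1 is the unit of A. -/

import Mathlib

/-!
Evaluate the series at the scalar points `z = z₀ + t • 1` with `0 < t` and `t ‖1‖ < R`. There
`(z - z₀)ⁿ = tⁿ • 1`, so the series becomes `∑ tⁿ • cₙ`; its terms tend to `0`, hence
`‖cₙ‖ ≤ t⁻ⁿ` eventually and `limsup ‖cₙ‖^(1/n) ≤ 1/t`. Letting `1/t` decrease to `‖1‖/R` gives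
the bound.
-/

open Filter Finset Topology

/-- `apow mul one z n` is the `n`-th power `zⁿ` in the algebra: `z⁰ = 1`,
`z^(k+1) = z^k ⋆ z`. -/
def apow {A : Type*} [AddCommGroup A] [Module ℝ A]
    (mul : A →ₗ[ℝ] A →ₗ[ℝ] A) (one : A) (z : A) : ℕ → A
  | 0 => one
  | n + 1 => mul (apow mul one z n) z

section ScalarPowers

variable {A : Type*} [AddCommGroup A] [Module ℝ A] {mul : A →ₗ[ℝ] A →ₗ[ℝ] A} {one : A}

theorem apow_smul_one (hone : ∀ x : A, mul x one = x) (t : ℝ) (n : ℕ) :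
    apow mul one (t • one) n = t ^ n • one := by
  induction n with
  | zero => simp [apow]
  | succ k ih => rw [apow, ih, map_smul, hone, smul_smul, ← pow_succ']

theorem mul_apow_smul_one (hone : ∀ x : A, mul x one = x) (x : A) (t : ℝ) (n : ℕ) :
    mul x (apow mul one (t • one) n) = t ^ n • x := by
  rw [apow_smul_one hone, map_smul, hone]

end ScalarPowers

theorem tendsto_zero_of_tendsto_sum_range {E : Type*} [AddCommGroup E] [TopologicalSpace E]
    [IsTopologicalAddGroup E] {f : ℕ → E} {S : E}
    (h : Tendsto (fun N => ∑ k ∈ range N, f k) atTop (𝓝 S)) : Tendsto f atTop (𝓝 0) := by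
  simpa only [Function.comp_def, sum_range_succ_sub_sum, sub_self] using
    (h.comp (tendsto_add_atTop_nat 1)).sub h

theorem rpow_one_div_le_inv_of_pow_mul_le_one {x t : ℝ} {n : ℕ} (hx : 0 ≤ x) (ht : 0 < t)
    (hn : n ≠ 0) (h : t ^ n * x ≤ 1) : x ^ (1 / (n : ℝ)) ≤ t⁻¹ := by
  have hx_le : x ≤ t⁻¹ ^ n := by
    rw [inv_pow, ← one_div, le_div_iff₀' (pow_pos ht n)]
    exact h
  calc x ^ (1 / (n : ℝ)) ≤ (t⁻¹ ^ n) ^ (1 / (n : ℝ)) :=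
        Real.rpow_le_rpow hx hx_le (by positivity)
    _ = t⁻¹ := by rw [one_div, Real.pow_rpow_inv_natCast (by positivity) hn]

theorem limsup_ofReal_norm_rpow_le_inv {E : Type*} [NormedAddCommGroup E] [NormedSpace ℝ E]
    {c : ℕ → E} {t : ℝ} (ht : 0 < t) (h : Tendsto (fun n => t ^ n • c n) atTop (𝓝 0)) :
    limsup (fun n => ENNReal.ofReal (‖c n‖ ^ (1 / (n : ℝ)))) atTop ≤ ENNReal.ofReal t⁻¹ := by
  refine limsup_le_of_le (by isBoundedDefault) ?_
  filter_upwards [NormedAddGroup.tendsto_nhds_zero.mp h 1 one_pos,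
    eventually_ne_atTop 0] with n hn hn0
  rw [norm_smul, Real.norm_of_nonneg (pow_pos ht n).le] at hn
  exact ENNReal.ofReal_le_ofReal
    (rpow_one_div_le_inv_of_pow_mul_le_one (norm_nonneg _) ht hn0 hn.le)

theorem ENNReal.le_ofReal_of_forall_lt {L : ENNReal} {b : ℝ} (hb : 0 ≤ b)
    (h : ∀ r : ℝ, b < r → L ≤ ENNReal.ofReal r) : L ≤ ENNReal.ofReal b := by
  refine le_of_forall_gt_imp_ge_of_dense fun c hc => ?_
  rcases eq_or_ne c ⊤ with rfl | hc_top
  · exact le_top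
  · rw [← ENNReal.ofReal_toReal hc_top]
    exact h _ ((ENNReal.ofReal_lt_iff_lt_toReal hb hc_top).mp hc)

theorem stmt8_limsup_bound_general {A : Type*} [NormedAddCommGroup A] [NormedSpace ℝ A]
    (mul : A →ₗ[ℝ] A →ₗ[ℝ] A) (one : A)
    (hone : ∀ x : A, mul one x = x ∧ mul x one = x)
    (c : ℕ → A) (z₀ : A) (R : ℝ) (hR : 0 < R)
    (hconv : ∀ z : A, ‖z - z₀‖ < R →
      ∃ S : A, Tendsto
        (fun N => ∑ k ∈ Finset.range N, mul (c k) (apow mul one (z - z₀) k))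
        atTop (𝓝 S)) :
    Filter.limsup (fun n => ENNReal.ofReal (‖c n‖ ^ (1 / (n : ℝ)))) atTop ≤
      ENNReal.ofReal (‖one‖ / R) := by
  refine ENNReal.le_ofReal_of_forall_lt (by positivity) fun r hr => ?_
  have hr0 : 0 < r := lt_of_le_of_lt (by positivity) hr
  have hz : ‖(z₀ + r⁻¹ • one) - z₀‖ < R := by
    rw [add_sub_cancel_left, norm_smul, Real.norm_of_nonneg (inv_nonneg.2 hr0.le),
      inv_mul_lt_iff₀ hr0]
    exact (div_lt_iff₀ hR).mp hr
  obtain ⟨S, hS⟩ := hconv _ hz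
  simp only [add_sub_cancel_left, mul_apow_smul_one fun x => (hone x).2] at hS
  simpa only [inv_inv] using
    limsup_ofReal_norm_rpow_le_inv (inv_pos.2 hr0) (tendsto_zero_of_tendsto_sum_range hS)

/-- If the power series `∑ cₙ ⋆ (z - z₀)ⁿ` converges for all `z`
with `‖z - z₀‖ < R` (some `R > 0`), then `limsup ‖cₙ‖^(1/n) ≤ ‖1‖/R`, where `1`
is the unit of the algebra. -/
theorem stmt8_limsup_bound {A : Type*} [NormedAddCommGroup A] [NormedSpace ℝ A]
    [FiniteDimensional ℝ A]
    (mul : A →ₗ[ℝ] A →ₗ[ℝ] A) (one : A)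
    (hone : ∀ x : A, mul one x = x ∧ mul x one = x)
    (hassoc : ∀ x y z : A, mul (mul x y) z = mul x (mul y z))
    (m : ℝ) (hm : 0 < m)
    (hsub : ∀ x y : A, ‖mul x y‖ ≤ m * ‖x‖ * ‖y‖)
    (c : ℕ → A) (z₀ : A) (R : ℝ) (hR : 0 < R)
    (hconv : ∀ z : A, ‖z - z₀‖ < R →
      ∃ S : A, Tendsto
        (fun N => ∑ k ∈ Finset.range N, mul (c k) (apow mul one (z - z₀) k))
        atTop (𝓝 S)) :
    Filter.limsup (fun n => ENNReal.ofReal (‖c n‖ ^ (1 / (n : ℝ)))) atTop ≤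
      ENNReal.ofReal (‖one‖ / R) :=
  stmt8_limsup_bound_general mul one hone c z₀ R hR hconv
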